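/- Let φ : Ω × [0,∞) → [0,∞) be a weak Φ-function. If there exist c > 1 and t₀ > 0 such that 2c·φ(x,t) ≤ φ(x, ct) for all t ≥ t₀ and a.e. x ∈ Ω, then φ satisfies (aInc)_p on Ω × [t₀,∞) for p = log(2)/log(c) + 1 > 1 with constant c^p. -/

import Mathlib

open MeasureTheory Filter

/-- A weak Φ-function on Ω. -/
def IsWeakPhi {α : Type*} (φ : α → ℝ → ℝ) : Prop :=
  (∀ x, MonotoneOn (φ x) (Set.Ici 0)) ∧
  (∀ x, φ x 0 = 0) ∧
  (∀ x, Tendsto (φ x) (nhdsWithin 0 (Set.Ioi 0)) (nhds 0)) ∧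
  (∀ x, Tendsto (φ x) atTop atTop) ∧
  (∃ L : ℝ, 1 ≤ L ∧ ∀ x, ∀ s t : ℝ, 0 < s → s < t → φ x s / s ≤ L * (φ x t / t))

/-!
If `c^p φ(t) ≤ φ(ct)` for `t ≥ t₀`, iterating gives `(c^p)^k φ(t) ≤ φ(c^k t)`. Given `t₀ ≤ t < s`,
choose `k` with `c^k t ≤ s < c^(k+1) t`; monotonicity gives `φ(s) ≥ (c^k)^p φ(t)`, while
`s^p ≤ c^p (c^k)^p t^p`, so `φ(t)/t^p ≤ c^p φ(s)/s^p`. With `p = log 2 / log c + 1` one has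
`c^p = 2c`.
-/

lemma Real.rpow_log_div_log_add_one {a c : ℝ} (hc₀ : 0 < c) (hc₁ : c ≠ 1) (ha : 0 < a) :
    c ^ (Real.log a / Real.log c + 1) = a * c := by
  rw [Real.rpow_add hc₀, ← Real.logb, Real.rpow_logb hc₀ hc₁ ha, Real.rpow_one]

lemma pow_mul_le_apply_pow_mul {f : ℝ → ℝ} {K c t₀ t : ℝ} (hK : 0 ≤ K) (hc : 1 ≤ c)
    (hf : ∀ t, t₀ ≤ t → K * f t ≤ f (c * t)) (ht₀ : 0 ≤ t₀) (ht : t₀ ≤ t) (k : ℕ) :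
    K ^ k * f t ≤ f (c ^ k * t) := by
  induction k with
  | zero => simp
  | succ k ih =>
    have hckt : t₀ ≤ c ^ k * t := ht.trans (le_mul_of_one_le_left (ht₀.trans ht) (one_le_pow₀ hc))
    calc K ^ (k + 1) * f t = K * (K ^ k * f t) := by ring
      _ ≤ K * f (c ^ k * t) := mul_le_mul_of_nonneg_left ih hK
      _ ≤ f (c * (c ^ k * t)) := hf _ hckt
      _ = f (c ^ (k + 1) * t) := by ring_nf

lemma div_rpow_le_mul_div_rpow {f : ℝ → ℝ} {c p t₀ t s : ℝ} (hc : 1 < c) (hp : 0 < p)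
    (ht₀ : 0 < t₀) (hmono : MonotoneOn f (Set.Ici t₀)) (hnonneg : ∀ t, t₀ ≤ t → 0 ≤ f t)
    (hf : ∀ t, t₀ ≤ t → c ^ p * f t ≤ f (c * t)) (ht : t₀ ≤ t) (hts : t < s) :
    f t / t ^ p ≤ c ^ p * (f s / s ^ p) := by
  have ht0 : 0 < t := ht₀.trans_le ht
  have hs0 : 0 < s := ht0.trans hts
  obtain ⟨k, hks, hsk⟩ := exists_nat_pow_near ((one_le_div ht0).2 hts.le) hc
  have hcks : c ^ k * t ≤ s := (le_div_iff₀ ht0).1 hks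
  have hskt : s ≤ c * c ^ k * t := by rw [← pow_succ']; exact ((div_lt_iff₀ ht0).1 hsk).le
  have hfs : (c ^ k) ^ p * f t ≤ f s := by
    rw [← Real.rpow_pow_comm (by positivity)]
    refine (pow_mul_le_apply_pow_mul (by positivity) hc.le hf ht₀.le ht k).trans ?_
    exact hmono (ht.trans (le_mul_of_one_le_left ht0.le (one_le_pow₀ hc.le)))
      (ht.trans hts.le) hcks
  have hsp : s ^ p ≤ c ^ p * (c ^ k) ^ p * t ^ p := by
    rw [← Real.mul_rpow (by positivity) (by positivity), ← Real.mul_rpow (by positivity) ht0.le]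
    exact Real.rpow_le_rpow hs0.le hskt hp.le
  rw [mul_div_assoc', div_le_div_iff₀ (by positivity) (by positivity)]
  calc f t * s ^ p ≤ f t * (c ^ p * (c ^ k) ^ p * t ^ p) :=
        mul_le_mul_of_nonneg_left hsp (hnonneg t ht)
    _ = c ^ p * ((c ^ k) ^ p * f t) * t ^ p := by ring
    _ ≤ c ^ p * f s * t ^ p := by gcongr

lemma IsWeakPhi.nonneg {α : Type*} {φ : α → ℝ → ℝ} (hφ : IsWeakPhi φ) (x : α) {t : ℝ}
    (ht : 0 ≤ t) : 0 ≤ φ x t := by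
  simpa [hφ.2.1 x] using hφ.1 x Set.self_mem_Ici ht ht

/-- If 2c·φ(x,t) ≤ φ(x,ct) for all t ≥ t₀ and a.e. x, with c > 1 and t₀ > 0,
then φ satisfies (aInc)_p on Ω × [t₀,∞) for p = log 2 / log c + 1 > 1 with constant c^p. -/
theorem stmt_2 {n : ℕ} (φ : EuclideanSpace ℝ (Fin n) → ℝ → ℝ)
    (hφ : IsWeakPhi φ) (c t₀ : ℝ) (hc : 1 < c) (ht₀ : 0 < t₀)
    (hdbl : ∀ᵐ x ∂volume, ∀ t : ℝ, t₀ ≤ t → 2 * c * φ x t ≤ φ x (c * t)) :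
    1 < Real.log 2 / Real.log c + 1 ∧
    ∀ᵐ x ∂volume, ∀ t s : ℝ, t₀ ≤ t → t < s →
      φ x t / t ^ (Real.log 2 / Real.log c + 1) ≤
        c ^ (Real.log 2 / Real.log c + 1) *
          (φ x s / s ^ (Real.log 2 / Real.log c + 1)) := by
  have hp : 1 < Real.log 2 / Real.log c + 1 :=
    lt_add_of_pos_left 1 (div_pos (Real.log_pos one_lt_two) (Real.log_pos hc))
  have hcp : c ^ (Real.log 2 / Real.log c + 1) = 2 * c :=
    Real.rpow_log_div_log_add_one (by positivity) hc.ne' two_pos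
  refine ⟨hp, ?_⟩
  filter_upwards [hdbl] with x hx
  intro t s ht hts
  refine div_rpow_le_mul_div_rpow hc (by positivity) ht₀
    ((hφ.1 x).mono (Set.Ici_subset_Ici.2 ht₀.le)) (fun u hu => hφ.nonneg x (ht₀.le.trans hu))
    (by rwa [hcp]) ht hts
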